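/- The dual Cauchy-type specialization: Σ_{|λ|=n} m_λ(1, z₂, z₂², ...) h_λ(1, z₁, z₁², ...) = Σ_μ z₂^{|μ|} / b_{μ,n}(z₁), where the right sum runs over partitions μ with at most n parts and b_{μ,n}(z) = ∏_{i ≥ 0} [m_i(μ)]_z with m_0(μ) = n - ℓ(μ) and [k]_z = ∏_{j=1}^k (1 - z^j). -/

import Mathlib

open PowerSeries

/-- The specialization `h_k(1, z, z², ...)` of the complete homogeneous symmetric
function: the coefficient of `z^N` counts multisets of exponents (one exponent
`i ≥ 0` for each of the `k` chosen variables `x_{i+1} = z^i`) of size `k`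
summing to `N`. -/
noncomputable def specH (k : ℕ) : PowerSeries ℤ :=
  PowerSeries.mk fun N => (Set.ncard {S : Multiset ℕ | Multiset.card S = k ∧ S.sum = N} : ℤ)

/-- The specialization `m_λ(1, z, z², ...)` of the monomial symmetric function:
the sum of `z^{Σ i·α_i}` over all distinct exponent sequences `α` whose multiset
of nonzero values equals the parts of `λ`. -/
noncomputable def specM (lam : Multiset ℕ) : PowerSeries ℤ :=
  PowerSeries.mk fun N => (Set.ncard {α : ℕ →₀ ℕ |
    Multiset.map α α.support.val = lam ∧ (α.sum fun i a => i * a) = N} : ℤ)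

/-- `[k]_z = ∏_{1 ≤ j ≤ k} (1 - z^j)`. -/
noncomputable def qfac (k : ℕ) : PowerSeries ℤ :=
  ∏ j ∈ Finset.range k, (1 - (PowerSeries.X : PowerSeries ℤ) ^ (j + 1))

/-- `h_λ(1,z,z²,...) = ∏_k h_{λ_k}(1,z,z²,...)`. -/
noncomputable def specHMulti (lam : Multiset ℕ) : PowerSeries ℤ :=
  (lam.map specH).prod

/-- `b_{μ,n}(z) = ∏_{i ≥ 0} [m_i(μ)]_z`, with `m_0(μ) = n - ℓ(μ)`, for a
partition `μ` with positive parts and at most `n` of them. -/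
noncomputable def bpol (n : ℕ) (μ : Multiset ℕ) : PowerSeries ℤ :=
  qfac (n - Multiset.card μ) * (Multiset.map (fun i => qfac (μ.count i)) μ.toFinset.val).prod

/-- The inverse `b_{μ,n}(z)⁻¹` (the constant term of `b_{μ,n}` is `1`). -/
noncomputable def bpolInv (n : ℕ) (μ : Multiset ℕ) : PowerSeries ℤ :=
  PowerSeries.invOfUnit (bpol n μ) 1


/-! `h_k(1, z, z², ...) = [k]_z⁻¹` because of the recursion `h_{k+1} = h_k + z^{k+1} h_{k+1}`:
a multiset counted by `h_{k+1}` either contains `0`, or is zero-free and then lowering each of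
its `k + 1` entries by one lowers its sum by `k + 1`.

Taking multiplicity vectors `μ ↦ α = (m_0(μ), m_1(μ), ...)` is a bijection from partitions of `m`
with at most `n` parts onto vectors `α : ℕ →₀ ℕ` with `∑ α_i = n` and `∑ i α_i = m`.
By the first step `b_{μ,n}(z)⁻¹ = h_λ(1, z, ...)` where `λ` is the multiset of nonzero entries of
`α`, a partition of `n`. Grouping the vectors `α` by `λ`, the number of `α` in a group of weight
`m` is precisely the `z^m`-coefficient of `m_λ(1, z, z², ...)`. -/

section CompleteHomogeneous

def cardSumMultisets (k N : ℕ) : Set (Multiset ℕ) :=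
  {S | Multiset.card S = k ∧ S.sum = N}

lemma cardSumMultisets_finite (k N : ℕ) : (cardSumMultisets k N).Finite := by
  refine (((Finset.range (N + 1)).sym k).finite_toSet.image (↑)).subset ?_
  rintro S ⟨hcard, hsum⟩
  refine ⟨⟨S, hcard⟩, Finset.mem_sym_iff.2 fun a ha => ?_, rfl⟩
  exact Finset.mem_range_succ_iff.2 (hsum ▸ Multiset.le_sum_of_mem ha)

lemma coeff_specH (k N : ℕ) : coeff N (specH k) = (cardSumMultisets k N).ncard := by
  rw [specH, coeff_mk, cardSumMultisets]

lemma specH_zero : specH 0 = 1 := by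
  ext N
  have : cardSumMultisets 0 N = if N = 0 then {0} else ∅ := by
    ext S
    simp only [cardSumMultisets, Set.mem_ofPred_eq, Multiset.card_eq_zero]
    split_ifs with hN
    · simp +contextual [hN]
    · simp +contextual [Ne.symm hN]
  rw [coeff_specH, this, coeff_one]
  split_ifs <;> simp

lemma Multiset.sum_map_succ (T : Multiset ℕ) :
    (T.map Nat.succ).sum = T.sum + Multiset.card T := by
  induction T using Multiset.induction with
  | empty => simp
  | cons a T ih => simp only [Multiset.map_cons, Multiset.sum_cons, Multiset.card_cons, ih]; omega

lemma Multiset.map_succ_pred {S : Multiset ℕ} (h0 : 0 ∉ S) : (S.map Nat.pred).map Nat.succ = S := by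
  rw [Multiset.map_map]
  exact (Multiset.map_congr rfl fun x hx => Nat.succ_pred_eq_of_ne_zero
    (ne_of_mem_of_not_mem hx h0)).trans S.map_id

lemma cardSumMultisets_succ (k N : ℕ) :
    cardSumMultisets (k + 1) N = (0 ::ₘ ·) '' cardSumMultisets k N ∪
      Multiset.map Nat.succ '' {T | Multiset.card T = k + 1 ∧ T.sum + (k + 1) = N} := by
  ext S
  constructor
  · rintro ⟨hcard, rfl⟩
    by_cases h0 : 0 ∈ S
    · refine Or.inl ⟨S.erase 0, ⟨?_, ?_⟩, Multiset.cons_erase h0⟩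
      · rw [Multiset.card_erase_of_mem h0, hcard]; rfl
      · rw [← Multiset.sum_erase h0, zero_add]
    · refine Or.inr ⟨S.map Nat.pred, ⟨by rw [Multiset.card_map, hcard], ?_⟩,
        Multiset.map_succ_pred h0⟩
      conv_rhs => rw [← Multiset.map_succ_pred h0]
      rw [Multiset.sum_map_succ, Multiset.card_map, hcard]
  · rintro (⟨T, ⟨hcard, hsum⟩, rfl⟩ | ⟨T, ⟨hcard, hsum⟩, rfl⟩)
    · exact ⟨by rw [Multiset.card_cons, hcard], by rw [Multiset.sum_cons, hsum, zero_add]⟩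
    · exact ⟨by rw [Multiset.card_map, hcard], by rw [Multiset.sum_map_succ, hcard, hsum]⟩

lemma ncard_cardSumMultisets_succ (k N : ℕ) :
    (cardSumMultisets (k + 1) N).ncard = (cardSumMultisets k N).ncard +
      {T : Multiset ℕ | Multiset.card T = k + 1 ∧ T.sum + (k + 1) = N}.ncard := by
  have hdisj : Disjoint ((0 ::ₘ ·) '' cardSumMultisets k N)
      (Multiset.map Nat.succ '' {T | Multiset.card T = k + 1 ∧ T.sum + (k + 1) = N}) := by
    refine Set.disjoint_left.2 ?_
    rintro _ ⟨T, -, rfl⟩ ⟨U, -, hU⟩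
    obtain ⟨x, -, hx⟩ := Multiset.mem_map.1 (by rw [hU]; exact Multiset.mem_cons_self 0 T)
    exact Nat.succ_ne_zero x hx
  have hfin : {T : Multiset ℕ | Multiset.card T = k + 1 ∧ T.sum + (k + 1) = N}.Finite :=
    (cardSumMultisets_finite (k + 1) (N - (k + 1))).subset fun T h =>
      show _ ∧ _ from ⟨h.1, by have := h.2; omega⟩
  rw [cardSumMultisets_succ,
    Set.ncard_union_eq hdisj ((cardSumMultisets_finite k N).image _) (hfin.image _),
    Set.ncard_image_of_injective _ fun _ _ => (Multiset.cons_inj_right 0).1,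
    Set.ncard_image_of_injective _ (Multiset.map_injective Nat.succ_injective)]

lemma specH_succ (k : ℕ) : specH (k + 1) = specH k + X ^ (k + 1) * specH (k + 1) := by
  ext N
  rw [map_add, coeff_specH, coeff_specH, ncard_cardSumMultisets_succ, coeff_X_pow_mul']
  split_ifs with hN
  · have : {T : Multiset ℕ | Multiset.card T = k + 1 ∧ T.sum + (k + 1) = N} =
        cardSumMultisets (k + 1) (N - (k + 1)) :=
      Set.ext fun T => and_congr_right fun _ => by omega
    rw [coeff_specH, this, Nat.cast_add]
  · have : {T : Multiset ℕ | Multiset.card T = k + 1 ∧ T.sum + (k + 1) = N} = ∅ :=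
      Set.eq_empty_of_forall_notMem fun T h => hN (h.2 ▸ Nat.le_add_left _ _)
    simp [this]

lemma qfac_mul_specH (k : ℕ) : qfac k * specH k = 1 := by
  induction k with
  | zero => simp [qfac, specH_zero]
  | succ k ih =>
    rw [qfac, Finset.prod_range_succ, ← qfac]
    linear_combination qfac k * specH_succ k + ih

lemma constantCoeff_qfac (k : ℕ) : constantCoeff (qfac k) = 1 := by
  simp [qfac, map_prod]

end CompleteHomogeneous

section Multiplicities

open Finsupp

lemma Finsupp.card_toMultiset_eq_degree {ι : Type*} (f : ι →₀ ℕ) :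
    Multiset.card (toMultiset f) = degree f :=
  card_toMultiset f

lemma Finsupp.sum_toMultiset_eq_weight_id (f : ℕ →₀ ℕ) : (toMultiset f).sum = weight id f :=
  sum_toMultiset f

noncomputable def multiplicities (n : ℕ) (μ : Multiset ℕ) : ℕ →₀ ℕ :=
  Multiset.toFinsupp μ + single 0 (n - Multiset.card μ)

variable {n : ℕ} {μ : Multiset ℕ}

lemma multiplicities_apply_zero (h0 : 0 ∉ μ) : multiplicities n μ 0 = n - Multiset.card μ := by
  simp [multiplicities, Multiset.count_eq_zero.2 h0]

lemma multiplicities_apply_of_ne_zero {i : ℕ} (hi : i ≠ 0) : multiplicities n μ i = μ.count i := by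
  simp [multiplicities, single_eq_of_ne' hi.symm]

lemma support_multiplicities_subset : (multiplicities n μ).support ⊆ insert 0 μ.toFinset := by
  intro i hi
  rcases eq_or_ne i 0 with rfl | hne
  · exact Finset.mem_insert_self _ _
  · rw [mem_support_iff, multiplicities_apply_of_ne_zero hne, Ne, Multiset.count_eq_zero,
      not_not] at hi
    exact Finset.mem_insert_of_mem (Multiset.mem_toFinset.2 hi)

lemma degree_multiplicities (hcard : Multiset.card μ ≤ n) : degree (multiplicities n μ) = n := by
  rw [multiplicities, map_add, degree_single, ← card_toMultiset_eq_degree,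
    Multiset.toFinsupp_toMultiset]
  omega

lemma weight_id_multiplicities : weight id (multiplicities n μ) = μ.sum := by
  rw [multiplicities, map_add, weight_single, id, smul_zero, add_zero,
    ← sum_toMultiset_eq_weight_id, Multiset.toFinsupp_toMultiset]

lemma erase_zero_multiplicities (h0 : 0 ∉ μ) :
    (multiplicities n μ).erase 0 = Multiset.toFinsupp μ := by
  ext i
  rcases eq_or_ne i 0 with rfl | hne
  · rw [erase_same, Multiset.toFinsupp_apply, Multiset.count_eq_zero.2 h0]
  · rw [erase_ne hne, multiplicities_apply_of_ne_zero hne, Multiset.toFinsupp_apply]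

lemma multiplicities_surjOn (n m : ℕ) :
    Set.SurjOn (multiplicities n) {μ | 0 ∉ μ ∧ Multiset.card μ ≤ n ∧ μ.sum = m}
      {α | degree α = n ∧ weight id α = m} := by
  rintro α ⟨hdeg, hweight⟩
  have hsplit := single_add_erase 0 α
  have hdeg' : α 0 + degree (α.erase 0) = n := by
    rw [← degree_single 0 (α 0), ← map_add, hsplit, hdeg]
  have hweight' : weight id (α.erase 0) = m := by
    rw [← hweight]
    conv_rhs => rw [← hsplit, map_add, weight_single, id, smul_zero, zero_add]
  refine ⟨toMultiset (α.erase 0), ⟨?_, ?_, ?_⟩, ?_⟩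
  · rw [← Multiset.count_eq_zero, count_toMultiset, erase_same]
  · rw [card_toMultiset_eq_degree]; omega
  · rw [sum_toMultiset_eq_weight_id, hweight']
  · rw [multiplicities, toMultiset_toFinsupp, card_toMultiset_eq_degree, add_comm,
      show n - degree (α.erase 0) = α 0 by omega, hsplit]

lemma multiplicities_bijOn (n m : ℕ) :
    Set.BijOn (multiplicities n) {μ | 0 ∉ μ ∧ Multiset.card μ ≤ n ∧ μ.sum = m}
      {α | degree α = n ∧ weight id α = m} := by
  refine ⟨fun μ ⟨_, hcard, hsum⟩ => ⟨degree_multiplicities hcard, ?_⟩, ?_,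
    multiplicities_surjOn n m⟩
  · rw [weight_id_multiplicities, hsum]
  · intro μ hμ ν hν h
    have := congrArg (fun α => toMultiset (α.erase 0)) h
    simpa only [erase_zero_multiplicities hμ.1, erase_zero_multiplicities hν.1,
      Multiset.toFinsupp_toMultiset] using this

end Multiplicities

section NonzeroValues

open Finsupp

variable {ι : Type*}

def Finsupp.nonzeroValues {M : Type*} [Zero M] (α : ι →₀ M) : Multiset M :=
  α.support.val.map α

lemma Finsupp.zero_notMem_nonzeroValues {M : Type*} [Zero M] (α : ι →₀ M) :
    0 ∉ α.nonzeroValues := by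
  rw [nonzeroValues, Multiset.mem_map]
  rintro ⟨i, hi, hαi⟩
  exact mem_support_iff.1 hi hαi

lemma Finsupp.sum_nonzeroValues {M : Type*} [AddCommMonoid M] (α : ι →₀ M) :
    α.nonzeroValues.sum = degree α :=
  rfl

lemma specHMulti_nonzeroValues (α : ι →₀ ℕ) :
    specHMulti α.nonzeroValues = α.prod fun _ k => specH k := by
  rw [specHMulti, nonzeroValues, Multiset.map_map]
  rfl

end NonzeroValues

section Inverse

open Finsupp

variable {n : ℕ} {μ : Multiset ℕ}

lemma bpol_eq_prod_qfac (h0 : 0 ∉ μ) : bpol n μ = (multiplicities n μ).prod fun _ k => qfac k := by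
  have h0' : 0 ∉ μ.toFinset := fun h => h0 (Multiset.mem_toFinset.1 h)
  rw [prod_of_support_subset _ support_multiplicities_subset _ fun _ _ => Finset.prod_range_zero _,
    Finset.prod_insert h0', multiplicities_apply_zero h0, bpol]
  congr 1
  exact Finset.prod_congr rfl fun i hi => by
    rw [multiplicities_apply_of_ne_zero (ne_of_mem_of_not_mem hi h0')]

lemma bpolInv_eq_specHMulti (h0 : 0 ∉ μ) :
    bpolInv n μ = specHMulti (multiplicities n μ).nonzeroValues := by
  have hinv : bpol n μ * specHMulti (multiplicities n μ).nonzeroValues = 1 := by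
    rw [bpol_eq_prod_qfac h0, specHMulti_nonzeroValues, ← prod_mul]
    exact Finset.prod_eq_one fun _ _ => qfac_mul_specH _
  have hconst : constantCoeff (bpol n μ) = 1 := by
    rw [bpol_eq_prod_qfac h0, Finsupp.prod, map_prod]
    exact Finset.prod_eq_one fun _ _ => constantCoeff_qfac _
  refine left_inv_eq_right_inv ?_ hinv
  rw [mul_comm]
  exact mul_invOfUnit _ 1 hconst

end Inverse

section Counting

open Finsupp

lemma finite_setOf_zero_notMem_sum_eq (n : ℕ) : {μ : Multiset ℕ | 0 ∉ μ ∧ μ.sum = n}.Finite := by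
  refine (Set.finite_range (Nat.Partition.parts : n.Partition → Multiset ℕ)).subset ?_
  rintro μ ⟨h0, hsum⟩
  exact ⟨⟨μ, fun hi => Nat.pos_of_ne_zero (ne_of_mem_of_not_mem hi h0), hsum⟩, rfl⟩

lemma finite_setOf_degree_weight_eq (n m : ℕ) :
    {α : ℕ →₀ ℕ | degree α = n ∧ weight id α = m}.Finite := by
  rw [← (multiplicities_bijOn n m).image_eq]
  exact ((finite_setOf_zero_notMem_sum_eq m).subset fun μ h => ⟨h.1, h.2.2⟩).image _

lemma setOf_degree_weight_eq_biUnion (n m : ℕ) :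
    {α : ℕ →₀ ℕ | degree α = n ∧ weight id α = m} =
      ⋃ lam ∈ {lam : Multiset ℕ | 0 ∉ lam ∧ lam.sum = n},
        {α | α.nonzeroValues = lam ∧ weight id α = m} := by
  ext α
  simp only [Set.mem_ofPred_eq, Set.mem_iUnion, exists_prop]
  constructor
  · rintro ⟨hdeg, hweight⟩
    exact ⟨_, ⟨zero_notMem_nonzeroValues α, by rw [sum_nonzeroValues, hdeg]⟩, rfl, hweight⟩
  · rintro ⟨_, ⟨-, hsum⟩, rfl, hweight⟩
    exact ⟨by rw [← sum_nonzeroValues, hsum], hweight⟩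

lemma finsum_mem_const_eq_ncard_smul {α M : Type*} [AddCommMonoid M] {s : Set α} (hs : s.Finite)
    (c : M) : ∑ᶠ _ ∈ s, c = s.ncard • c := by
  rw [finsum_mem_eq_finite_toFinset_sum _ hs, Finset.sum_const, Set.ncard_eq_toFinset_card _ hs]

lemma finsum_mem_degree_weight_eq {M : Type*} [AddCommMonoid M] (f : Multiset ℕ → M) (n m : ℕ) :
    ∑ᶠ α ∈ {α : ℕ →₀ ℕ | degree α = n ∧ weight id α = m}, f α.nonzeroValues =
      ∑ᶠ lam ∈ {lam : Multiset ℕ | 0 ∉ lam ∧ lam.sum = n},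
        {α : ℕ →₀ ℕ | α.nonzeroValues = lam ∧ weight id α = m}.ncard • f lam := by
  have hfiber : ∀ lam ∈ {lam : Multiset ℕ | 0 ∉ lam ∧ lam.sum = n},
      {α : ℕ →₀ ℕ | α.nonzeroValues = lam ∧ weight id α = m}.Finite := fun lam hlam =>
    (finite_setOf_degree_weight_eq n m).subset fun α hα =>
      ⟨by rw [← sum_nonzeroValues, hα.1, hlam.2], hα.2⟩
  rw [setOf_degree_weight_eq_biUnion,
    finsum_mem_biUnion _ (finite_setOf_zero_notMem_sum_eq n) hfiber]
  · refine finsum_mem_congr rfl fun lam hlam => ?_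
    rw [finsum_mem_congr rfl fun α hα => congrArg f hα.1,
      finsum_mem_const_eq_ncard_smul (hfiber lam hlam)]
  · exact fun lam _ lam' _ hne => Set.disjoint_left.2 fun α h h' => hne (h.1.symm.trans h'.1)

lemma coeff_specM (lam : Multiset ℕ) (N : ℕ) :
    coeff N (specM lam) = {α : ℕ →₀ ℕ | α.nonzeroValues = lam ∧ weight id α = N}.ncard := by
  simp only [specM, coeff_mk, nonzeroValues, weight_apply, smul_eq_mul, id, mul_comm]

end Counting

/-- `Σ_{μ : ℓ(μ) ≤ n} z₂^{|μ|} b_{μ,n}(z₁)⁻¹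
      = Σ_{λ : |λ| = n} m_λ(1,z₂,z₂²,...) h_λ(1,z₁,z₁²,...)`,
as power series in `z₂` with coefficients in `ℤ[[z₁]]`. -/
theorem sum_bpolInv_eq_cauchy_specialization (n : ℕ) :
    (PowerSeries.mk fun m => ∑ᶠ μ ∈ {μ : Multiset ℕ |
        (0 : ℕ) ∉ μ ∧ Multiset.card μ ≤ n ∧ μ.sum = m}, bpolInv n μ)
      = (∑ᶠ lam ∈ {lam : Multiset ℕ | (0 : ℕ) ∉ lam ∧ lam.sum = n},
          (PowerSeries.map (Int.castRingHom (PowerSeries ℤ)) (specM lam)) *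
            PowerSeries.C (R := PowerSeries ℤ) (specHMulti lam)) := by
  refine PowerSeries.ext fun m => ?_
  rw [coeff_mk, finsum_mem_congr rfl fun μ hμ => bpolInv_eq_specHMulti hμ.1,
    finsum_mem_eq_of_bijOn (g := fun α => specHMulti α.nonzeroValues) _ (multiplicities_bijOn n m)
      fun _ _ => rfl,
    finsum_mem_degree_weight_eq]
  refine .trans ?_
    ((coeff m).toAddMonoidHom.map_finsum_mem _ (finite_setOf_zero_notMem_sum_eq n)).symm
  refine finsum_mem_congr rfl fun lam _ => ?_
  simp only [nsmul_eq_mul, LinearMap.toAddMonoidHom_coe, coeff_mul_C, coeff_map, coeff_specM,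
    map_natCast]
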